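/- arXiv:1708.09730 — 6 statements merged into one kernel-verified Lean document; each statement's English description precedes it below -/
import Mathlib

section
/- Let d ≥ 2 and let ζ ∈ ℂ be a primitive d-th root of unity. For integers i, j, i', j', the following are equivalent: (a) for every natural number l with 1 ≤ l ≤ d and every integer p one has ζ^{p·i + (2p+l-1)·j} · (∑_{k=0}^{l-1} ζ^{i·k}) = ζ^{p·i' + (2p+l-1)·j'} · (∑_{k=0}^{l-1} ζ^{i'·k}); (b) either (i' ≡ i mod d and j' ≡ j mod d) or (i' ≡ −i mod d and j' ≡ i + j mod d). -/
/-!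
Write `q = ζ ^ i` and `t = ζ ^ j`; the character value is `q ^ p * t ^ (2p + l - 1) * ∑_{k<l} qᵏ`.
The substitution `(q, t) ↦ (q⁻¹, q t)` leaves it unchanged, because reversing the geometric sum
gives `q ^ (l-1) * ∑_{k<l} q⁻ᵏ = ∑_{k<l} qᵏ`.

Conversely, the values at `p = 0`, namely `t ^ m * ∑_{k≤m} qᵏ` for `m < d`, already determine the
orbit. The value at `m = d - 1` vanishes exactly when `q ≠ 1`; if `q = 1`, the value at `m = 1`
gives `t`. If `q ≠ 1`, multiplying by `q - 1` turns the values into `q (tq) ^ m - t ^ m`, a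
combination of the two distinct `d`-th roots of unity `tq` and `t`. By orthogonality of
characters on `ℤ/d` this pins down the pair `{tq, t}`, leaving exactly the two points of the orbit.
-/

open Finset

variable {K : Type*} [Field K]

theorem IsPrimitiveRoot.zpow_eq_zpow_iff_modEq {ζ : K} {d : ℕ} (hζ : IsPrimitiveRoot ζ d)
    (hd : d ≠ 0) {a b : ℤ} : ζ ^ a = ζ ^ b ↔ a ≡ b [ZMOD d] := by
  have hz : ζ ^ b ≠ 0 := zpow_ne_zero _ (hζ.ne_zero hd)
  rw [← div_eq_one_iff_eq hz, ← zpow_sub₀ (hζ.ne_zero hd), hζ.zpow_eq_one_iff_dvd,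
    Int.modEq_comm, Int.modEq_iff_dvd]

theorem zpow_pow_eq_one_of_pow_eq_one {ζ : K} {d : ℕ} (hζ : ζ ^ d = 1) (a : ℤ) :
    (ζ ^ a) ^ d = 1 := by
  rw [← zpow_natCast, ← zpow_mul, mul_comm, zpow_mul, zpow_natCast, hζ, one_zpow]

theorem geom_sum_range_of_pow_eq_one [DecidableEq K] {r : K} {d : ℕ} (hr : r ^ d = 1) :
    ∑ k ∈ range d, r ^ k = if r = 1 then (d : K) else 0 := by
  split_ifs with h
  · simp [h]
  · rw [geom_sum_eq h, hr, sub_self, zero_div]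

theorem sum_range_pow_mul_inv_pow [DecidableEq K] {a b : K} {d : ℕ} (hd : d ≠ 0) (ha : a ^ d = 1)
    (hb : b ^ d = 1) : ∑ l ∈ range d, a ^ l * (b ^ l)⁻¹ = if a = b then (d : K) else 0 := by
  have hb0 : b ≠ 0 := by rintro rfl; simp [hd] at hb
  simp_rw [← div_eq_mul_inv, ← div_pow]
  rw [geom_sum_range_of_pow_eq_one (by rw [div_pow, ha, hb, div_one])]
  simp only [div_eq_one_iff_eq hb0]

theorem pow_mul_geom_sum_inv {q : K} (hq : q ≠ 0) (m : ℕ) :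
    q ^ m * ∑ k ∈ range (m + 1), q⁻¹ ^ k = ∑ k ∈ range (m + 1), q ^ k := by
  rw [mul_sum, ← sum_range_reflect]
  refine sum_congr rfl fun k hk => ?_
  have hkm : k ≤ m := Nat.lt_succ_iff.mp (mem_range.mp hk)
  rw [inv_pow, ← pow_sub₀ q hq (by omega), Nat.add_sub_cancel, Nat.sub_sub_self hkm]

theorem eq_and_eq_or_of_forall_lt_add_pow_eq {d : ℕ} (hd : (d : K) ≠ 0) {a b a' b' α β γ δ : K}
    (ha : a ^ d = 1) (hb : b ^ d = 1) (ha' : a' ^ d = 1) (hb' : b' ^ d = 1)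
    (hab : a ≠ b) (hα : α ≠ 0) (hβ : β ≠ 0)
    (h : ∀ l < d, α * a ^ l + β * b ^ l = γ * a' ^ l + δ * b' ^ l) :
    (a' = a ∧ b' = b) ∨ (a' = b ∧ b' = a) := by
  classical
  have hd0 : d ≠ 0 := by rintro rfl; simp at hd
  -- Summing against `(c ^ l)⁻¹` over a full period extracts the coefficient of `c ^ l`.
  have coeff : ∀ c, c ^ d = 1 →
      α * (if a = c then (d : K) else 0) + β * (if b = c then (d : K) else 0) =
        γ * (if a' = c then (d : K) else 0) + δ * (if b' = c then (d : K) else 0) := by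
    intro c hc
    have hsum := sum_congr rfl fun l hl => congrArg (· * (c ^ l)⁻¹) (h l (mem_range.mp hl))
    simpa only [add_mul, mul_assoc, sum_add_distrib, ← mul_sum,
      sum_range_pow_mul_inv_pow hd0 ha' hc, sum_range_pow_mul_inv_pow hd0 hb' hc,
      sum_range_pow_mul_inv_pow hd0 ha hc, sum_range_pow_mul_inv_pow hd0 hb hc] using hsum
  have ha_mem : a' = a ∨ b' = a := by
    by_contra! hne
    simpa [hab.symm, hne, hα, hd] using coeff a ha
  have hb_mem : a' = b ∨ b' = b := by
    by_contra! hne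
    simpa [hab, hne, hβ, hd] using coeff b hb
  grind

/-- `doubleChar (ζ ^ i) (ζ ^ j) l p` is the character value `χ_{i,j}(m_{l,p})`. -/
def doubleChar (q t : K) (l : ℕ) (p : ℤ) : K :=
  q ^ p * t ^ (2 * p + l - 1) * ∑ k ∈ range l, q ^ k

theorem zpow_mul_sum_eq_doubleChar {ζ : K} (hζ : ζ ≠ 0) (i j : ℤ) (l : ℕ) (p : ℤ) :
    ζ ^ (p * i + (2 * p + (l : ℤ) - 1) * j) * ∑ k ∈ range l, ζ ^ (i * (k : ℤ)) =
      doubleChar (ζ ^ i) (ζ ^ j) l p := by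
  rw [doubleChar, zpow_add₀ hζ, mul_comm p, mul_comm _ j, zpow_mul, zpow_mul]
  simp only [zpow_mul, zpow_natCast]

theorem doubleChar_succ_zero (q t : K) (m : ℕ) :
    doubleChar q t (m + 1) 0 = t ^ m * ∑ k ∈ range (m + 1), q ^ k := by
  simp [doubleChar]

theorem doubleChar_inv_mul {q : K} (hq : q ≠ 0) (t : K) (l : ℕ) (p : ℤ) :
    doubleChar q⁻¹ (q * t) l p = doubleChar q t l p := by
  rcases l with _ | m
  · simp [doubleChar]
  · have hexp : 2 * p + ((m + 1 : ℕ) : ℤ) - 1 = 2 * p + m := by push_cast; ring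
    rw [doubleChar, doubleChar, hexp, mul_zpow, ← pow_mul_geom_sum_inv hq m, inv_zpow',
      ← zpow_natCast q m, zpow_add₀ hq, two_mul, zpow_add₀ hq, zpow_neg]
    field_simp

section CharZero

variable [CharZero K] {d : ℕ} {q t q' t' : K}

theorem eq_and_eq_or_of_forall_lt_pow_mul_geom_sum_eq_of_ne_one (hd : d ≠ 0)
    (hq : q ^ d = 1) (ht : t ^ d = 1) (hq' : q' ^ d = 1) (ht' : t' ^ d = 1)
    (hq1 : q ≠ 1) (hq1' : q' ≠ 1)
    (H : ∀ m < d, t ^ m * ∑ k ∈ range (m + 1), q ^ k = t' ^ m * ∑ k ∈ range (m + 1), q' ^ k) :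
    (q' = q ∧ t' = t) ∨ (q' = q⁻¹ ∧ t' = q * t) := by
  have hq0 : q ≠ 0 := (IsUnit.of_pow_eq_one hq hd).ne_zero
  have ht0 : t ≠ 0 := (IsUnit.of_pow_eq_one ht hd).ne_zero
  have hroot : ∀ {x y : K}, x ^ d = 1 → y ^ d = 1 → (x * y) ^ d = 1 := fun hx hy => by
    rw [mul_pow, hx, hy, one_mul]
  have hchar : ∀ m < d, ((q' - 1) * q) * (t * q) ^ m + (1 - q') * t ^ m =
      ((q - 1) * q') * (t' * q') ^ m + (1 - q) * t' ^ m := by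
    intro m hm
    -- `(q - 1) * ∑ k ∈ range (m + 1), q ^ k = q ^ (m + 1) - 1`
    linear_combination (q - 1) * (q' - 1) * H m hm - t ^ m * (q' - 1) * geom_sum_mul q (m + 1)
      + t' ^ m * (q - 1) * geom_sum_mul q' (m + 1)
  rcases eq_and_eq_or_of_forall_lt_add_pow_eq (by exact_mod_cast hd) (hroot ht hq) ht
      (hroot ht' hq') ht' (by simpa [ht0] using hq1) (mul_ne_zero (sub_ne_zero.mpr hq1') hq0)
      (sub_ne_zero.mpr (Ne.symm hq1')) hchar with ⟨hprod, htt⟩ | ⟨hprod, htt⟩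
  · subst htt
    exact Or.inl ⟨mul_left_cancel₀ ht0 hprod, rfl⟩
  · rw [htt, mul_assoc, mul_eq_left₀ ht0] at hprod
    exact Or.inr ⟨eq_inv_of_mul_eq_one_right hprod, htt.trans (mul_comm t q)⟩

theorem eq_and_eq_or_of_forall_lt_pow_mul_geom_sum_eq (hd : 2 ≤ d) (hq : q ^ d = 1)
    (ht : t ^ d = 1) (hq' : q' ^ d = 1) (ht' : t' ^ d = 1)
    (H : ∀ m < d, t ^ m * ∑ k ∈ range (m + 1), q ^ k = t' ^ m * ∑ k ∈ range (m + 1), q' ^ k) :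
    (q' = q ∧ t' = t) ∨ (q' = q⁻¹ ∧ t' = q * t) := by
  classical
  have hone : q = 1 ↔ q' = 1 := by
    have hlast := H (d - 1) (by omega)
    rw [Nat.sub_add_cancel (by omega), geom_sum_range_of_pow_eq_one hq,
      geom_sum_range_of_pow_eq_one hq'] at hlast
    have hd0 : (d : K) ≠ 0 := by norm_cast; omega
    have ht0 : t ≠ 0 := (IsUnit.of_pow_eq_one ht (by omega)).ne_zero
    have ht0' : t' ≠ 0 := (IsUnit.of_pow_eq_one ht' (by omega)).ne_zero
    split_ifs at hlast <;> simp_all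
  by_cases hq1 : q = 1
  · have hq1' := hone.mp hq1
    have htwo : t = t' := by simpa [hq1, hq1'] using H 1 (by omega)
    exact Or.inl ⟨hq1'.trans hq1.symm, htwo.symm⟩
  · exact eq_and_eq_or_of_forall_lt_pow_mul_geom_sum_eq_of_ne_one (by omega) hq ht hq' ht' hq1
      (mt hone.mpr hq1) H

theorem forall_doubleChar_eq_iff (hd : 2 ≤ d) (hq : q ^ d = 1) (ht : t ^ d = 1)
    (hq' : q' ^ d = 1) (ht' : t' ^ d = 1) :
    (∀ l : ℕ, 1 ≤ l → l ≤ d → ∀ p : ℤ, doubleChar q t l p = doubleChar q' t' l p) ↔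
      (q' = q ∧ t' = t) ∨ (q' = q⁻¹ ∧ t' = q * t) := by
  constructor
  · intro H
    refine eq_and_eq_or_of_forall_lt_pow_mul_geom_sum_eq hd hq ht hq' ht' fun m hm => ?_
    simpa only [doubleChar_succ_zero] using H (m + 1) (by omega) (by omega) 0
  · rintro (⟨rfl, rfl⟩ | ⟨rfl, rfl⟩) l - - p
    · rfl
    · exact (doubleChar_inv_mul (IsUnit.of_pow_eq_one hq (by omega)).ne_zero t l p).symm

end CharZero

theorem stmt0 (d : ℕ) (hd : 2 ≤ d) (ζ : ℂ) (hζ : IsPrimitiveRoot ζ d)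
    (i j i' j' : ℤ) :
    (∀ l : ℕ, 1 ≤ l → l ≤ d → ∀ p : ℤ,
      ζ ^ (p * i + (2 * p + (l : ℤ) - 1) * j) * (∑ k ∈ Finset.range l, ζ ^ (i * (k : ℤ))) =
      ζ ^ (p * i' + (2 * p + (l : ℤ) - 1) * j') * (∑ k ∈ Finset.range l, ζ ^ (i' * (k : ℤ)))) ↔
    ((i' ≡ i [ZMOD (d : ℤ)] ∧ j' ≡ j [ZMOD (d : ℤ)]) ∨
     (i' ≡ -i [ZMOD (d : ℤ)] ∧ j' ≡ i + j [ZMOD (d : ℤ)])) := by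
  have hz : ζ ≠ 0 := hζ.ne_zero (by omega)
  have hroot (a : ℤ) : (ζ ^ a) ^ d = 1 := zpow_pow_eq_one_of_pow_eq_one hζ.pow_eq_one a
  simp only [zpow_mul_sum_eq_doubleChar hz]
  simp only [← hζ.zpow_eq_zpow_iff_modEq (by omega), zpow_neg, zpow_add₀ hz]
  exact forall_doubleChar_eq_iff hd (hroot i) (hroot j) (hroot i') (hroot j')
end

section
/- Let d ≥ 2 and let ζ ∈ ℂ be a primitive d-th root of unity. For all integers l and p, (1/d) · ∑_{j=0}^{d-1} ∑_{k=0}^{d-1} ζ^{−j·k + (2p+l−1)·k + (p+l−1)·(j−k−1)} = ζ^{(p−1)·(l+p−1)}. -/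
/-!
Writing the exponent as `(p - j) k + (p + l - 1)(j - 1)`, the inner sum over `k` is a geometric
sum in `ζ ^ (p - j)`, which is `d` when `j ≡ p [ZMOD d]` and `0` otherwise. Hence only
`j = p % d` survives, and its term is `ζ ^ ((p + l - 1)(p - 1))` because `ζ` has order `d`.
-/

open Finset

theorem Int.dvd_sub_natCast_iff_eq_emod {d j : ℕ} (hj : j < d) (p : ℤ) :
    (d : ℤ) ∣ p - j ↔ (j : ℤ) = p % d := by
  rw [← Int.modEq_iff_dvd, Int.ModEq, Int.emod_eq_of_lt (Int.natCast_nonneg j) (by omega)]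

theorem Finset.sum_range_ite_dvd_sub {M : Type*} [AddCommMonoid M] {d : ℕ} (hd : d ≠ 0)
    (p : ℤ) (f : ℤ → M) :
    ∑ j ∈ range d, (if (d : ℤ) ∣ p - j then f j else 0) = f (p % d) := by
  have hp : 0 ≤ p % d := Int.emod_nonneg p (by omega)
  have hpd : p % d < d := Int.emod_lt_of_pos p (by omega)
  have hmem : (p % d).toNat < d := by omega
  rw [sum_eq_single_of_mem _ (mem_range.2 hmem)]
  · rw [if_pos ((Int.dvd_sub_natCast_iff_eq_emod hmem p).2 (by omega)), Int.toNat_of_nonneg hp]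
  · intro j hj hne
    rw [if_neg (by rw [Int.dvd_sub_natCast_iff_eq_emod (mem_range.1 hj)]; omega)]

namespace IsPrimitiveRoot

variable {K : Type*} [Field K] {ζ : K} {d : ℕ}

theorem sum_range_zpow_mul (hζ : IsPrimitiveRoot ζ d) (m : ℤ) :
    ∑ k ∈ range d, ζ ^ (m * k) = if (d : ℤ) ∣ m then (d : K) else 0 := by
  simp_rw [zpow_mul, zpow_natCast]
  split_ifs with h
  · simp [(hζ.zpow_eq_one_iff_dvd m).2 h]
  · have hne : ζ ^ m ≠ 1 := mt (hζ.zpow_eq_one_iff_dvd m).1 h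
    have hpow : (ζ ^ m) ^ d = 1 := by
      rw [← zpow_natCast, ← zpow_mul, mul_comm, zpow_mul, hζ.zpow_eq_one, one_zpow]
    rw [geom_sum_eq hne, hpow, sub_self, zero_div]

theorem zpow_eq_zpow_of_modEq (hζ : IsPrimitiveRoot ζ d) (hd : d ≠ 0) {a b : ℤ}
    (h : a ≡ b [ZMOD d]) : ζ ^ a = ζ ^ b := by
  have hζ0 : ζ ≠ 0 := hζ.ne_zero hd
  rw [← div_eq_one_iff_eq (zpow_ne_zero b hζ0), ← zpow_sub₀ hζ0, hζ.zpow_eq_one_iff_dvd]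
  exact Int.modEq_iff_dvd.1 h.symm

end IsPrimitiveRoot

theorem stmt1 (d : ℕ) (hd : 2 ≤ d) (ζ : ℂ) (hζ : IsPrimitiveRoot ζ d) (l p : ℤ) :
    (1 / (d : ℂ)) * ∑ j ∈ Finset.range d, ∑ k ∈ Finset.range d,
      ζ ^ (-(j : ℤ) * (k : ℤ) + (2 * p + l - 1) * (k : ℤ) + (p + l - 1) * ((j : ℤ) - (k : ℤ) - 1)) =
    ζ ^ ((p - 1) * (l + p - 1)) := by
  have hd0 : d ≠ 0 := by omega
  have hζ0 : ζ ≠ 0 := hζ.ne_zero hd0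
  calc _ = 1 / (d : ℂ) * ∑ j ∈ range d, ∑ k ∈ range d,
        ζ ^ ((p - j) * (k : ℤ)) * ζ ^ ((p + l - 1) * ((j : ℤ) - 1)) := by
        simp_rw [← zpow_add₀ hζ0]
        congr! 4
        ring
    _ = 1 / (d : ℂ) * ∑ j ∈ range d,
        if (d : ℤ) ∣ p - j then (d : ℂ) * ζ ^ ((p + l - 1) * ((j : ℤ) - 1)) else 0 := by
        simp_rw [← sum_mul, hζ.sum_range_zpow_mul, ite_mul, zero_mul]
    _ = ζ ^ ((p + l - 1) * (p % d - 1)) := by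
        rw [sum_range_ite_dvd_sub hd0 p fun j ↦ (d : ℂ) * ζ ^ ((p + l - 1) * (j - 1))]
        field_simp
    _ = ζ ^ ((p - 1) * (l + p - 1)) := by
        refine hζ.zpow_eq_zpow_of_modEq hd0 ?_
        convert ((Int.mod_modEq p d).sub_right 1).mul_left (p + l - 1) using 1
        ring
end

section
/- Let d ≥ 2 and let ζ ∈ ℂ be a primitive d-th root of unity. Then ∑_{l=1}^{d} ∑_{p=0}^{d-1} (ζ^{p} · ∑_{k=0}^{l-1} ζ^{k}) · (ζ^{1-l-p} · ∑_{k=0}^{l-1} ζ^{k}) = 2d² / ((1−ζ)(1−ζ^{-1})). -/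
/-!
The product `dim₋(M_{l,p}) · dim₊(M_{l,p})` does not depend on `p`: it is `S_l(ζ) S_l(ζ⁻¹)` with
`S_l(x) = ∑_{k<l} x^k`, which the geometric sum formula turns into
`(2 - ζ^l - ζ^{-l}) / ((1 - ζ)(1 - ζ⁻¹))`. Summing over `l = 1, …, d`, the powers `ζ^l` and `ζ^{-l}`
run over full periods and cancel, leaving `d · 2d / ((1 - ζ)(1 - ζ⁻¹))`.
-/

open Finset

section GeomSum

variable {K : Type*} [Field K] {x : K}

theorem zpow_one_sub_mul_geom_sum (hx : x ≠ 0) (l : ℕ) :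
    x ^ (1 - (l : ℤ)) * ∑ k ∈ range l, x ^ k = ∑ k ∈ range l, x⁻¹ ^ k := by
  rw [← sum_range_reflect, mul_sum]
  refine sum_congr rfl fun k hk => ?_
  have hkl : k < l := mem_range.mp hk
  rw [← zpow_natCast, ← zpow_natCast, inv_zpow', ← zpow_add₀ hx]
  congr 1
  omega

theorem zpow_mul_geom_sum_mul_zpow_mul_geom_sum (hx : x ≠ 0) (l : ℕ) (p : ℤ) :
    (x ^ p * ∑ k ∈ range l, x ^ (k : ℤ)) * (x ^ (1 - (l : ℤ) - p) * ∑ k ∈ range l, x ^ (k : ℤ)) =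
      (∑ k ∈ range l, x ^ k) * ∑ k ∈ range l, x⁻¹ ^ k := by
  simp only [zpow_natCast]
  rw [mul_mul_mul_comm, ← zpow_add₀ hx, add_sub_cancel, mul_left_comm,
    zpow_one_sub_mul_geom_sum hx]

theorem geom_sum_mul_geom_sum_inv (hx0 : x ≠ 0) (hx1 : x ≠ 1) (l : ℕ) :
    (∑ k ∈ range l, x ^ k) * ∑ k ∈ range l, x⁻¹ ^ k =
      (2 - x ^ l - x⁻¹ ^ l) / ((1 - x) * (1 - x⁻¹)) := by
  have hinv1 : x⁻¹ ≠ 1 := inv_ne_one.mpr hx1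
  rw [geom_sum_eq hx1, geom_sum_eq hinv1, div_mul_div_comm]
  congr 1
  · rw [inv_pow, mul_sub, sub_mul, mul_inv_cancel₀ (pow_ne_zero l hx0)]
    ring
  · ring

end GeomSum

theorem IsPrimitiveRoot.sum_Icc_pow_eq_zero {K : Type*} [CommRing K] [IsDomain K] {ζ : K}
    {d : ℕ} (hζ : IsPrimitiveRoot ζ d) (hd : 1 < d) : ∑ l ∈ Icc 1 d, ζ ^ l = 0 := by
  rw [← Finset.Ico_add_one_right_eq_Icc, sum_Ico_eq_sum_range, Nat.add_sub_cancel]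
  simp only [pow_add, pow_one, ← mul_sum, hζ.geom_sum_eq_zero hd, mul_zero]

theorem stmt2 (d : ℕ) (hd : 2 ≤ d) (ζ : ℂ) (hζ : IsPrimitiveRoot ζ d) :
    ∑ l ∈ Finset.Icc 1 d, ∑ p ∈ Finset.range d,
      ((ζ ^ (p : ℤ)) * ∑ k ∈ Finset.range l, ζ ^ (k : ℤ)) *
      ((ζ ^ (1 - (l : ℤ) - (p : ℤ))) * ∑ k ∈ Finset.range l, ζ ^ (k : ℤ)) =
    2 * (d : ℂ) ^ 2 / ((1 - ζ) * (1 - ζ⁻¹)) := by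
  have hζ0 : ζ ≠ 0 := hζ.ne_zero (by omega)
  simp only [zpow_mul_geom_sum_mul_zpow_mul_geom_sum hζ0, sum_const, card_range, nsmul_eq_mul,
    geom_sum_mul_geom_sum_inv hζ0 (hζ.ne_one hd), ← mul_sum, ← sum_div, sum_sub_distrib,
    hζ.sum_Icc_pow_eq_zero hd, hζ.inv.sum_Icc_pow_eq_zero hd, Nat.card_Icc, Nat.add_sub_cancel]
  ring
end

section
/- Let d ≥ 2, let ζ ∈ ℂ be a primitive d-th root of unity, and let 𝒮 be the d × d complex matrix with entries 𝒮_{a,b} = ζ^{a·b} for a, b ∈ {0,…,d−1}. For all k, k' ∈ {0,…,d−1}, the determinant of the (d−1) × (d−1) matrix obtained from 𝒮 by deleting the k-th row and the k'-th column equals (−1)^{k+k'} · ζ^{−k·k'} · δ(d)/d, where δ(d) = ∏_{0 ≤ a < b ≤ d−1} (ζ^{b} − ζ^{a}) = det 𝒮. -/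
/-!
`𝒮` is the Vandermonde matrix of the powers of `ζ`, so `δ = det 𝒮`. Orthogonality of the characters
of `μ_d` says `𝒮 · (ζ^{-ab}) = d · 1`, hence `d · adj 𝒮 = det 𝒮 · (ζ^{-ab})`, and the minors of `𝒮`
are its cofactors up to the sign `(-1)^{k+k'}`.
-/

open Finset

theorem Fin.prod_prod_Ioi_eq_prod_range_prod_range {M : Type*} [CommMonoid M] (N : ℕ)
    (g : ℕ → ℕ → M) :
    ∏ i : Fin N, ∏ j ∈ Ioi i, g i j = ∏ b ∈ range N, ∏ a ∈ range b, g a b := by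
  rw [prod_comm' (t' := univ) (s' := Iio) (by simp [and_comm]), ← Fin.prod_univ_eq_prod_range]
  refine prod_congr rfl fun j _ => ?_
  rw [← Nat.Iio_eq_range, ← Fin.map_valEmbedding_Iio, prod_map]
  rfl

open Matrix in
theorem Matrix.det_of_pow_mul {R : Type*} [CommRing R] (x : R) (N : ℕ) :
    (of fun a b : Fin N => x ^ ((a : ℕ) * (b : ℕ))).det =
      ∏ b ∈ range N, ∏ a ∈ range b, (x ^ b - x ^ a) := by
  have hV : (of fun a b : Fin N => x ^ ((a : ℕ) * (b : ℕ))) = vandermonde fun a => x ^ (a : ℕ) := by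
    ext a b
    simp [vandermonde_apply, pow_mul]
  rw [hV, det_vandermonde]
  exact Fin.prod_prod_Ioi_eq_prod_range_prod_range N fun a b => x ^ b - x ^ a

theorem geom_sum_eq_zero_of_pow_eq_one {K : Type*} [DivisionRing K] {x : K} {n : ℕ}
    (hx : x ≠ 1) (h : x ^ n = 1) : ∑ i ∈ range n, x ^ i = 0 := by
  rw [geom_sum_eq hx, h, sub_self, zero_div]

theorem IsPrimitiveRoot.sum_pow_mul_zpow_neg_mul {K : Type*} [Field K] {ζ : K} {d : ℕ}
    (hζ : IsPrimitiveRoot ζ d) (a b : Fin d) :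
    ∑ c : Fin d, ζ ^ ((a : ℕ) * (c : ℕ)) * ζ ^ (-((c : ℕ) : ℤ) * ((b : ℕ) : ℤ)) =
      if a = b then (d : K) else 0 := by
  have hζ0 : ζ ≠ 0 := hζ.ne_zero (Fin.pos a).ne'
  set w := ζ ^ (((a : ℕ) : ℤ) - ((b : ℕ) : ℤ))
  have hterm (c : Fin d) :
      ζ ^ ((a : ℕ) * (c : ℕ)) * ζ ^ (-((c : ℕ) : ℤ) * ((b : ℕ) : ℤ)) = w ^ (c : ℕ) := by
    rw [← zpow_natCast, ← zpow_add₀ hζ0, ← zpow_natCast w, ← zpow_mul]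
    congr 1
    push_cast
    ring
  simp only [hterm]
  rw [Fin.sum_univ_eq_sum_range (w ^ ·)]
  split_ifs with hab
  · simp [w, hab]
  · have hw : w ≠ 1 := by
      rw [Ne, hζ.zpow_eq_one_iff_dvd]
      intro hdvd
      refine hab (Fin.ext ?_)
      have := Int.eq_zero_of_abs_lt_dvd hdvd (by rw [abs_sub_lt_iff]; omega)
      omega
    refine geom_sum_eq_zero_of_pow_eq_one hw ?_
    rw [← zpow_natCast, ← zpow_mul, mul_comm, zpow_mul, zpow_natCast, hζ.pow_eq_one, one_zpow]

theorem IsPrimitiveRoot.of_pow_mul_mul_of_zpow_neg_mul {K : Type*} [Field K] {ζ : K} {d : ℕ}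
    (hζ : IsPrimitiveRoot ζ d) :
    Matrix.of (fun a b : Fin d => ζ ^ ((a : ℕ) * (b : ℕ))) *
        Matrix.of (fun a b : Fin d => ζ ^ (-((a : ℕ) : ℤ) * ((b : ℕ) : ℤ))) = (d : K) • 1 := by
  ext a b
  simp only [Matrix.mul_apply, Matrix.of_apply, hζ.sum_pow_mul_zpow_neg_mul, Matrix.smul_apply,
    Matrix.one_apply, smul_eq_mul, mul_ite, mul_one, mul_zero]

theorem Matrix.smul_adjugate_of_mul_eq_smul_one {n R : Type*} [Fintype n] [DecidableEq n]
    [CommRing R] {A B : Matrix n n R} {c : R} (h : A * B = c • 1) :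
    c • A.adjugate = A.det • B :=
  calc c • A.adjugate = A.adjugate * (A * B) := by rw [h, Matrix.mul_smul, Matrix.mul_one]
    _ = A.det • B := by rw [← Matrix.mul_assoc, adjugate_mul, Matrix.smul_mul, Matrix.one_mul]

theorem Matrix.det_submatrix_succAbove_eq_neg_one_pow_mul_adjugate {R : Type*} [CommRing R]
    {n : ℕ} (A : Matrix (Fin (n + 1)) (Fin (n + 1)) R) (i j : Fin (n + 1)) :
    (A.submatrix i.succAbove j.succAbove).det = (-1) ^ ((i : ℕ) + (j : ℕ)) * A.adjugate j i := by
  rw [adjugate_fin_succ_eq_det_submatrix, ← mul_assoc, ← pow_add, Even.neg_one_pow ⟨_, rfl⟩,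
    one_mul]

theorem stmt3_general (n : ℕ) (ζ : ℂ) (hζ : IsPrimitiveRoot ζ (n + 1))
    (S : Matrix (Fin (n + 1)) (Fin (n + 1)) ℂ)
    (hS : ∀ a b : Fin (n + 1), S a b = ζ ^ ((a : ℕ) * (b : ℕ)))
    (δ : ℂ) (hδ : δ = ∏ b ∈ Finset.range (n + 1), ∏ a ∈ Finset.range b, (ζ ^ b - ζ ^ a))
    (k k' : Fin (n + 1)) :
    δ = S.det ∧
    (S.submatrix k.succAbove k'.succAbove).det =
      (-1 : ℂ) ^ ((k : ℕ) + (k' : ℕ)) * ζ ^ (-((k : ℕ) : ℤ) * ((k' : ℕ) : ℤ)) * δ / ((n : ℂ) + 1) := by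
  obtain rfl : S = Matrix.of fun a b : Fin (n + 1) => ζ ^ ((a : ℕ) * (b : ℕ)) := Matrix.ext hS
  have hdet : δ = _ := hδ.trans (Matrix.det_of_pow_mul ζ (n + 1)).symm
  refine ⟨hdet, ?_⟩
  have hcofactor := congr_fun₂
    (Matrix.smul_adjugate_of_mul_eq_smul_one hζ.of_pow_mul_mul_of_zpow_neg_mul) k' k
  simp only [Matrix.smul_apply, Matrix.of_apply, smul_eq_mul, Nat.cast_add, Nat.cast_one] at hcofactor
  rw [← hdet, show -((k' : ℕ) : ℤ) * (k : ℕ) = -(k : ℕ) * (k' : ℕ) by ring] at hcofactor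
  rw [Matrix.det_submatrix_succAbove_eq_neg_one_pow_mul_adjugate,
    eq_div_iff (Nat.cast_add_one_ne_zero n)]
  linear_combination (-1 : ℂ) ^ ((k : ℕ) + (k' : ℕ)) * hcofactor

theorem stmt3 (n : ℕ) (hn : 1 ≤ n) (ζ : ℂ) (hζ : IsPrimitiveRoot ζ (n + 1))
    (S : Matrix (Fin (n + 1)) (Fin (n + 1)) ℂ)
    (hS : ∀ a b : Fin (n + 1), S a b = ζ ^ ((a : ℕ) * (b : ℕ)))
    (δ : ℂ) (hδ : δ = ∏ b ∈ Finset.range (n + 1), ∏ a ∈ Finset.range b, (ζ ^ b - ζ ^ a))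
    (k k' : Fin (n + 1)) :
    δ = S.det ∧
    (S.submatrix k.succAbove k'.succAbove).det =
      (-1 : ℂ) ^ ((k : ℕ) + (k' : ℕ)) * ζ ^ (-((k : ℕ) : ℤ) * ((k' : ℕ) : ℤ)) * δ / ((n : ℂ) + 1) :=
  stmt3_general n ζ hζ S hS δ hδ k k'
end

section
/- Let d ≥ 2 be a natural number and let i, j be integers with 0 ≤ i < j ≤ d−1. Let r be the unique integer with 0 ≤ r < d and r ≡ i + j (mod d). Then d(1−d²) − 6(i² + d·i) − 6(j² + d·j) − 6·∑_{k=0}^{d−1}(k² + d·k) + 6(r² + d·r) ≡ 12·i·j (mod 12d). -/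
/-!
With `q x = x ^ 2 + d * x`, the value of `6 * q x` modulo `12 * d` depends only on `x` modulo `d`,
because `6 * (q (x + d * c) - q x) = 12 * d * c * x + 6 * d ^ 2 * c * (c + 1)` and `c * (c + 1)` is
even. So `r` may be replaced by `i + j`, and `6 * (q (i + j) - q i - q j) = 12 * i * j`. The remaining
constant `d * (1 - d ^ 2) - 6 * ∑ k < d, q k = -6 * d ^ 2 * (d - 1)` vanishes modulo `12 * d` since
`d * (d - 1)` is even.
-/

namespace Int

theorem six_mul_sq_add_mul_modEq_of_modEq {d x y : ℤ} (h : x ≡ y [ZMOD d]) :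
    6 * (x ^ 2 + d * x) ≡ 6 * (y ^ 2 + d * y) [ZMOD 12 * d] := by
  obtain ⟨c, hc⟩ := Int.modEq_iff_dvd.mp h
  obtain rfl : y = x + d * c := by linear_combination hc
  obtain ⟨m, hm⟩ := Int.even_mul_succ_self c
  rw [Int.modEq_iff_dvd]
  exact ⟨c * x + d * m, by linear_combination 6 * d ^ 2 * hm⟩

end Int

theorem six_mul_sum_range_sq_add_mul (n : ℕ) (a : ℤ) :
    6 * ∑ k ∈ Finset.range n, ((k : ℤ) ^ 2 + a * k) = n * (n - 1) * (2 * n - 1 + 3 * a) := by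
  induction n with
  | zero => simp
  | succ n ih =>
    rw [Finset.sum_range_succ, mul_add, ih]
    push_cast
    ring

theorem mul_one_sub_sq_sub_six_mul_sum_range_modEq_zero (d : ℕ) :
    (d : ℤ) * (1 - (d : ℤ) ^ 2) - 6 * ∑ k ∈ Finset.range d, ((k : ℤ) ^ 2 + (d : ℤ) * (k : ℤ))
      ≡ 0 [ZMOD 12 * d] := by
  obtain ⟨m, hm⟩ := Int.even_mul_succ_self ((d : ℤ) - 1)
  rw [six_mul_sum_range_sq_add_mul, Int.modEq_zero_iff_dvd]
  exact ⟨-m, by linear_combination -6 * (d : ℤ) * hm⟩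

theorem stmt6_general (d : ℕ) (i j : ℤ)
    (r : ℤ) (hr : r ≡ i + j [ZMOD (d : ℤ)]) :
    (d : ℤ) * (1 - (d : ℤ) ^ 2) - 6 * (i ^ 2 + (d : ℤ) * i) - 6 * (j ^ 2 + (d : ℤ) * j)
      - 6 * ∑ k ∈ Finset.range d, ((k : ℤ) ^ 2 + (d : ℤ) * (k : ℤ)) + 6 * (r ^ 2 + (d : ℤ) * r)
      ≡ 12 * i * j [ZMOD (12 * (d : ℤ))] := by
  calc _ = ((d : ℤ) * (1 - (d : ℤ) ^ 2)
          - 6 * ∑ k ∈ Finset.range d, ((k : ℤ) ^ 2 + (d : ℤ) * (k : ℤ)))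
          - 6 * (i ^ 2 + d * i) - 6 * (j ^ 2 + d * j) + 6 * (r ^ 2 + d * r) := by ring
    _ ≡ 0 - 6 * (i ^ 2 + d * i) - 6 * (j ^ 2 + d * j) + 6 * ((i + j) ^ 2 + d * (i + j))
          [ZMOD 12 * d] :=
      (((mul_one_sub_sq_sub_six_mul_sum_range_modEq_zero d).sub_right _).sub_right _).add
        (Int.six_mul_sq_add_mul_modEq_of_modEq hr)
    _ = 12 * i * j := by ring

theorem stmt6 (d : ℕ) (hd : 2 ≤ d) (i j : ℤ) (hi : 0 ≤ i) (hij : i < j) (hj : j ≤ (d : ℤ) - 1)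
    (r : ℤ) (hr0 : 0 ≤ r) (hrd : r < (d : ℤ)) (hr : r ≡ i + j [ZMOD (d : ℤ)]) :
    (d : ℤ) * (1 - (d : ℤ) ^ 2) - 6 * (i ^ 2 + (d : ℤ) * i) - 6 * (j ^ 2 + (d : ℤ) * j)
      - 6 * ∑ k ∈ Finset.range d, ((k : ℤ) ^ 2 + (d : ℤ) * (k : ℤ)) + 6 * (r ^ 2 + (d : ℤ) * r)
      ≡ 12 * i * j [ZMOD (12 * (d : ℤ))] :=
  stmt6_general d i j r hr
end

section
/- Let d ≥ 2 and let ζ ∈ ℂ be a primitive d-th root of unity. For all natural numbers l, l' with 1 ≤ l, l' ≤ d and all integers p, p': ζ^{p} · (∑_{a=0}^{l−1} ζ^{a}) · ζ^{−l·p' + (2p'+l'−1)·(1−p)} · (∑_{b=0}^{l'−1} ζ^{−l·b}) = (ζ^{2p+l+2p'+l'−1}/(1−ζ)) · ζ^{−l·l' − l·p' − p·l' − 2p·p'} · (1 − ζ^{l·l'}). -/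
/-!
Multiplying by `1 - ζ`, the first geometric sum telescopes to `1 - ζ ^ l`, and
`(1 - ζ ^ l) * ∑ b < l', ζ ^ (-l * b) = ζ ^ (l - l * l') * (1 - ζ ^ (l * l'))`. Hence the identity
holds for every `ζ ≠ 0, 1`; what remains is bookkeeping of integer exponents.
-/

open Finset

theorem one_sub_mul_geom_sum_zpow_neg {K : Type*} [Field K] {x : K} (hx : x ≠ 0) (n : ℕ) :
    (1 - x) * ∑ b ∈ range n, x ^ (-(b : ℤ)) = x ^ (1 - (n : ℤ)) * (1 - x ^ (n : ℤ)) := by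
  induction n with
  | zero => simp
  | succ n ih =>
    rw [sum_range_succ, mul_add, ih]
    simp only [sub_mul, mul_sub, one_mul, mul_one, ← zpow_add₀ hx, ← zpow_one_add₀ hx]
    push_cast
    ring_nf

theorem one_sub_mul_geom_sum_mul_geom_sum_zpow {K : Type*} [Field K] {x : K} (hx : x ≠ 0)
    (m n : ℕ) :
    (1 - x) * ((∑ a ∈ range m, x ^ (a : ℤ)) * ∑ b ∈ range n, x ^ (-(m : ℤ) * b)) =
      x ^ ((m : ℤ) - m * n) * (1 - x ^ ((m : ℤ) * n)) := by
  have hsum_m : (1 - x) * ∑ a ∈ range m, x ^ (a : ℤ) = 1 - x ^ (m : ℤ) := by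
    simp only [zpow_natCast, mul_neg_geom_sum]
  have hsum_n : ∑ b ∈ range n, x ^ (-(m : ℤ) * b) =
      ∑ b ∈ range n, (x ^ (m : ℤ)) ^ (-(b : ℤ)) := by
    simp only [← zpow_mul, neg_mul_comm]
  rw [← mul_assoc, hsum_m, hsum_n, one_sub_mul_geom_sum_zpow_neg (zpow_ne_zero _ hx),
    ← zpow_mul, ← zpow_mul, show (m : ℤ) * (1 - n) = m - m * n by ring]

theorem stmt10_general (d : ℕ) (hd : 2 ≤ d) (ζ : ℂ) (hζ : IsPrimitiveRoot ζ d)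
    (l l' : ℕ) (p p' : ℤ) :
    ζ ^ p * (∑ a ∈ Finset.range l, ζ ^ (a : ℤ)) *
      (ζ ^ (-(l : ℤ) * p' + (2 * p' + (l' : ℤ) - 1) * (1 - p)) *
        ∑ b ∈ Finset.range l', ζ ^ (-(l : ℤ) * (b : ℤ))) =
    (ζ ^ (2 * p + (l : ℤ) + 2 * p' + (l' : ℤ) - 1) / (1 - ζ)) *
      ζ ^ (-(l : ℤ) * (l' : ℤ) - (l : ℤ) * p' - p * (l' : ℤ) - 2 * p * p') *
      (1 - ζ ^ ((l : ℤ) * (l' : ℤ))) := by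
  have hζ0 : ζ ≠ 0 := hζ.ne_zero (by omega)
  have h1ζ : 1 - ζ ≠ 0 := sub_ne_zero.mpr (hζ.ne_one hd).symm
  rw [div_mul_eq_mul_div, div_mul_eq_mul_div, eq_div_iff h1ζ]
  calc _ = ζ ^ (p + (-(l : ℤ) * p' + (2 * p' + (l' : ℤ) - 1) * (1 - p))) *
        ((1 - ζ) * ((∑ a ∈ range l, ζ ^ (a : ℤ)) * ∑ b ∈ range l', ζ ^ (-(l : ℤ) * b))) := by
        rw [zpow_add₀ hζ0 p]; ring
    _ = ζ ^ (p + (-(l : ℤ) * p' + (2 * p' + (l' : ℤ) - 1) * (1 - p)) + ((l : ℤ) - l * l')) *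
        (1 - ζ ^ ((l : ℤ) * l')) := by
        rw [one_sub_mul_geom_sum_mul_geom_sum_zpow hζ0, zpow_add₀ hζ0 _ ((l : ℤ) - l * l')]
        ring
    _ = _ := by
        rw [← zpow_add₀ hζ0]; congr 2; ring

theorem stmt10 (d : ℕ) (hd : 2 ≤ d) (ζ : ℂ) (hζ : IsPrimitiveRoot ζ d)
    (l l' : ℕ) (hl : 1 ≤ l) (hld : l ≤ d) (hl' : 1 ≤ l') (hl'd : l' ≤ d) (p p' : ℤ) :
    ζ ^ p * (∑ a ∈ Finset.range l, ζ ^ (a : ℤ)) *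
      (ζ ^ (-(l : ℤ) * p' + (2 * p' + (l' : ℤ) - 1) * (1 - p)) *
        ∑ b ∈ Finset.range l', ζ ^ (-(l : ℤ) * (b : ℤ))) =
    (ζ ^ (2 * p + (l : ℤ) + 2 * p' + (l' : ℤ) - 1) / (1 - ζ)) *
      ζ ^ (-(l : ℤ) * (l' : ℤ) - (l : ℤ) * p' - p * (l' : ℤ) - 2 * p * p') *
      (1 - ζ ^ ((l : ℤ) * (l' : ℤ))) :=
  stmt10_general d hd ζ hζ l l' p p'
end
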